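/- The generating function of p-fountains satisfies the closed recursive form F(q,z) = (qz)^{p-1} / (1 - qz F(q,qz)) + (1 - (qz)^{p-1})/(1 - qz), as an identity of formal power series. -/

import Mathlib

/-- A `p`-fountain: an arrangement of coins in rows. `rows i` is the set of positions of
coins in row `i` (row `0` is the bottom row). The bottom row consists of consecutive coins,
and each coin in a higher row has exactly `p+1` descendant coins immediately below it
(so two horizontally adjacent coins share exactly `p` common descendants). -/
structure Fountain (p : ℕ) where
  rows : ℕ → Finset ℕ
  bottom_consecutive : rows 0 = Finset.range (rows 0).card
  supported : ∀ i j, j ∈ rows (i + 1) → ∀ d ≤ p, j + d ∈ rows i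

namespace Fountain
variable {p : ℕ}

/-- The length of the bottom row. -/
def width (F : Fountain p) : ℕ := (F.rows 0).card

/-- The total number of coins. (For `p ≥ 1` all rows above row `width` are empty.) -/
def coins (F : Fountain p) : ℕ := ∑ i ∈ Finset.range (F.width + 1), (F.rows i).card

/-- A fountain is primitive if its next-to-bottom row is full, i.e. has `width - p` coins
(in particular this requires `width ≥ p`). -/
def Primitive (F : Fountain p) : Prop :=
  p ≤ F.width ∧ F.rows 1 = Finset.range (F.width - p)

end Fountain

/-- `fcount p n k` = number of `(n,k)` `p`-fountains. -/
noncomputable def fcount (p n k : ℕ) : ℕ :=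
  Set.ncard {F : Fountain p | F.coins = n ∧ F.width = k}

/-- `gcount p n k` = number of primitive `(n,k)` `p`-fountains. -/
noncomputable def gcount (p n k : ℕ) : ℕ :=
  Set.ncard {F : Fountain p | F.Primitive ∧ F.coins = n ∧ F.width = k}

/-- `hcount p n k` = number of non-primitive `(n,k)` `p`-fountains. -/
noncomputable def hcount (p n k : ℕ) : ℕ :=
  Set.ncard {F : Fountain p | ¬ F.Primitive ∧ F.coins = n ∧ F.width = k}

/-- The generating function `F(q,z) = ∑ f(n,k) qⁿ zᵏ`, where `q = X 0`, `z = X 1`. -/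
noncomputable def Fgf (p : ℕ) : MvPowerSeries (Fin 2) ℚ :=
  fun d => (fcount p (d 0) (d 1) : ℚ)

/-- The generating function `G(q,z) = ∑ g(n,k) qⁿ zᵏ` of primitive fountains. -/
noncomputable def Ggf (p : ℕ) : MvPowerSeries (Fin 2) ℚ :=
  fun d => (gcount p (d 0) (d 1) : ℚ)

/-- The generating function `H(q,z) = ∑ h(n,k) qⁿ zᵏ` of non-primitive fountains. -/
noncomputable def Hgf (p : ℕ) : MvPowerSeries (Fin 2) ℚ :=
  fun d => (hcount p (d 0) (d 1) : ℚ)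

/-- The substituted series `F(q, qz) = ∑ f(n,k) q^{n+k} z^k`. -/
noncomputable def Fqz (p : ℕ) : MvPowerSeries (Fin 2) ℚ :=
  fun d => if d 1 ≤ d 0 then (fcount p (d 0 - d 1) (d 1) : ℚ) else 0


/-!
A fountain `W` of width `k ≥ p` splits at the first gap `g` of its second row. Above the full
segment `[0, g)` of row `1` sits a fountain `P` of width `g`, and right of the gap everything is a
fountain `Q` of width `k - g - 1 ≥ p - 1`; conversely every such pair glues back, with
`coins W = coins P + width P + 1 + coins Q`. Since fountains of width `≤ p` are bare bottom rows,
in generating functions this reads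
`F - ∑_{i<p} (qz)^i = qz F(q,qz) (F - ∑_{i<p-1} (qz)^i)`,
a linear equation for `F` whose solution is the closed form.
-/

open Finset MvPowerSeries
open Finsupp (single single_add)

theorem Finsupp.single_zero_add_single_one_eq_iff {a b : ℕ} {d : Fin 2 →₀ ℕ} :
    single 0 a + single 1 b = d ↔ a = d 0 ∧ b = d 1 := by
  constructor
  · rintro rfl
    simp
  · rintro ⟨rfl, rfl⟩
    ext i
    fin_cases i <;> simp

theorem X_zero_mul_X_one_pow {R : Type*} [CommSemiring R] (i : ℕ) :
    (X 0 * X 1 : MvPowerSeries (Fin 2) R) ^ i = monomial (single 0 i + single 1 i) 1 := by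
  rw [mul_pow, X_pow_eq, X_pow_eq, monomial_mul_monomial, one_mul]

section WeightGF

variable {σ α β : Type*} (R : Type*) [CommSemiring R]

/-- `∑ₐ X ^ (w a)`. An infinite fibre has `Nat.card` zero, hence the finiteness hypotheses
below. -/
noncomputable def weightGF (w : α → σ →₀ ℕ) : MvPowerSeries σ R :=
  fun d => (Nat.card {a // w a = d} : R)

variable {R}

theorem coeff_weightGF (w : α → σ →₀ ℕ) (d : σ →₀ ℕ) :
    coeff d (weightGF R w) = Nat.card {a // w a = d} := by
  rw [coeff_apply]; rfl

theorem weightGF_congr (e : α ≃ β) {w : β → σ →₀ ℕ} {w' : α → σ →₀ ℕ}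
    (h : ∀ a, w (e a) = w' a) : weightGF R w = weightGF R w' := by
  ext d
  simp only [coeff_weightGF]
  exact congrArg _ (Nat.card_congr (e.subtypeEquiv fun a => by rw [h])).symm

theorem weightGF_of_fintype [Fintype α] (w : α → σ →₀ ℕ) :
    weightGF R w = ∑ a, monomial (w a) 1 := by
  classical
  ext d
  simp only [coeff_weightGF, map_sum, coeff_monomial, Nat.card_eq_fintype_card,
    Fintype.card_subtype, Finset.sum_boole]
  simp [eq_comm]

theorem monomial_mul_weightGF (e : σ →₀ ℕ) (w : α → σ →₀ ℕ) :
    monomial e 1 * weightGF R w = weightGF R (fun a => e + w a) := by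
  ext d
  rw [coeff_monomial_mul, coeff_weightGF, coeff_weightGF]
  split_ifs with hed
  · rw [one_mul, Nat.card_congr (Equiv.subtypeEquivRight fun a => ?_)]
    rw [eq_tsub_iff_add_eq_of_le hed, add_comm]
  · have : IsEmpty {a // e + w a = d} := ⟨fun a => hed (a.2 ▸ le_self_add)⟩
    simp

theorem weightGF_eq_add_compl (w : α → σ →₀ ℕ) (hw : ∀ d, Finite {a // w a = d})
    (P : α → Prop) :
    weightGF R w = weightGF R (fun a : {a // P a} => w a) +
      weightGF R (fun a : {a // ¬ P a} => w a) := by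
  classical
  ext d
  have swap (Q : α → Prop) :
      Nat.card {x : {a // w a = d} // Q x} = Nat.card {x : {a // Q a} // w x = d} :=
    Nat.card_congr <| (Equiv.subtypeSubtypeEquivSubtypeInter _ Q).trans <|
      (Equiv.subtypeEquivRight fun _ => and_comm).trans
        (Equiv.subtypeSubtypeEquivSubtypeInter Q _).symm
  simp only [map_add, coeff_weightGF]
  rw [← swap, ← swap, ← Nat.cast_add, ← Nat.card_sum, Nat.card_congr (Equiv.sumCompl _)]

theorem finite_fibers_subtype (w : α → σ →₀ ℕ) (hw : ∀ d, Finite {a // w a = d})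
    (P : α → Prop) (d : σ →₀ ℕ) : Finite {a : {a // P a} // w a = d} :=
  Finite.of_injective (fun a => (⟨a.1.1, a.2⟩ : {a // w a = d}))
    fun a b h => by ext; simpa using h

theorem weightGF_mul (w₁ : α → σ →₀ ℕ) (w₂ : β → σ →₀ ℕ)
    (hw₁ : ∀ d, Finite {a // w₁ a = d}) (hw₂ : ∀ d, Finite {b // w₂ b = d}) :
    weightGF R w₁ * weightGF R w₂ = weightGF R (fun x : α × β => w₁ x.1 + w₂ x.2) := by
  classical
  ext d
  let weights : {x : α × β // w₁ x.1 + w₂ x.2 = d} → antidiagonal d :=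
    fun x => ⟨(w₁ x.1.1, w₂ x.1.2), mem_antidiagonal.2 x.2⟩
  have fiber (y : antidiagonal d) :
      {x // weights x = y} ≃ {a // w₁ a = y.1.1} × {b // w₂ b = y.1.2} :=
    { toFun := fun x => (⟨x.1.1.1, congrArg (·.1.1) x.2⟩, ⟨x.1.1.2, congrArg (·.1.2) x.2⟩)
      invFun := fun ab =>
        ⟨⟨(ab.1, ab.2), by rw [ab.1.2, ab.2.2]; exact mem_antidiagonal.1 y.2⟩,
        by ext <;> simp [weights, ab.1.2, ab.2.2]⟩
      left_inv := fun x => rfl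
      right_inv := fun ab => rfl }
  have (y : antidiagonal d) : Finite {x // weights x = y} :=
    have := hw₁ y.1.1; have := hw₂ y.1.2; Finite.of_equiv _ (fiber y).symm
  rw [coeff_mul, coeff_weightGF, ← Nat.card_congr (Equiv.sigmaFiberEquiv weights),
    Nat.card_sigma, ← Finset.sum_coe_sort]
  push_cast [Nat.card_congr (fiber _), Nat.card_prod, coeff_weightGF]
  rfl

end WeightGF

namespace Fountain
variable {p : ℕ}

@[ext] theorem ext {F G : Fountain p} (h : F.rows = G.rows) : F = G := by
  cases F; cases G; simpa using h

theorem rows_zero (F : Fountain p) : F.rows 0 = range F.width :=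
  F.bottom_consecutive

theorem rows_succ_subset (F : Fountain p) (i : ℕ) : F.rows (i + 1) ⊆ F.rows i := fun j hj => by
  simpa using F.supported i j hj 0 p.zero_le

theorem rows_subset_range (F : Fountain p) : ∀ i, F.rows i ⊆ range F.width
  | 0 => F.rows_zero.subset
  | i + 1 => (F.rows_succ_subset i).trans (F.rows_subset_range i)

theorem lt_width_of_mem {F : Fountain p} {i j : ℕ} (h : j ∈ F.rows i) : j < F.width :=
  mem_range.1 (F.rows_subset_range i h)

theorem add_lt_width_of_mem_rows_one {F : Fountain p} {j : ℕ} (hj : j ∈ F.rows 1) :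
    j + p < F.width :=
  lt_width_of_mem (F.supported 0 j hj p le_rfl)

/-- Under a coin `j` of row `i + 1` lies the coin `j + 1` of row `i`, so rows shrink from the
right. -/
theorem rows_subset_range_sub (hp : 1 ≤ p) (F : Fountain p) :
    ∀ i, F.rows i ⊆ range (F.width - i)
  | 0 => F.rows_zero.subset
  | i + 1 => fun j hj => by
    have := mem_range.1 (F.rows_subset_range_sub hp i (F.supported i j hj 1 hp))
    rw [mem_range]; omega

theorem rows_eq_empty (hp : 1 ≤ p) (F : Fountain p) {i : ℕ} (hi : F.width ≤ i) :
    F.rows i = ∅ := by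
  simpa [Nat.sub_eq_zero_of_le hi] using F.rows_subset_range_sub hp i

theorem coins_eq_sum (hp : 1 ≤ p) (F : Fountain p) {N : ℕ} (hN : F.width < N) :
    F.coins = ∑ i ∈ range N, (F.rows i).card :=
  sum_subset (range_subset_range.2 hN) fun i _ hi => by
    rw [F.rows_eq_empty hp (by rw [mem_range] at hi; omega), card_empty]

theorem finite_width_eq (hp : 1 ≤ p) (k : ℕ) : Finite {F : Fountain p // F.width = k} := by
  refine Finite.of_injective
    (fun F (i : Fin k) => (⟨F.1.rows i,
      mem_powerset.2 ((F.1.rows_subset_range i).trans (by rw [F.2]))⟩ : (range k).powerset))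
    fun F G h => ?_
  ext1; ext1; funext i
  by_cases hi : i < k
  · simpa using congrArg Subtype.val (congrFun h ⟨i, hi⟩)
  · rw [F.1.rows_eq_empty hp (by omega), G.1.rows_eq_empty hp (by omega)]

def bottomRow (p k : ℕ) : Fountain p where
  rows i := if i = 0 then range k else ∅
  bottom_consecutive := by simp
  supported i j hj := by simp at hj

@[simp] theorem bottomRow_width (k : ℕ) : (bottomRow p k).width = k := by
  simp [width, bottomRow]

@[simp] theorem bottomRow_coins (k : ℕ) : (bottomRow p k).coins = k := by
  rw [coins, sum_range_succ']
  simp [bottomRow]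

theorem eq_bottomRow (F : Fountain p) (h : F.width ≤ p) : F = bottomRow p F.width := by
  have hsucc (i : ℕ) : F.rows (i + 1) = ∅ := by
    induction i with
    | zero =>
      refine eq_empty_of_forall_notMem fun j hj => ?_
      have := add_lt_width_of_mem_rows_one hj
      omega
    | succ i ih => exact subset_empty.1 (ih ▸ F.rows_succ_subset (i + 1))
  ext1; funext i
  cases i with
  | zero => simpa [bottomRow] using F.rows_zero
  | succ i => simpa [bottomRow] using hsucc i

theorem exists_not_mem_rows_one (F : Fountain p) : ∃ j, j ∉ F.rows 1 :=
  ⟨F.width, fun h => (lt_width_of_mem h).false⟩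

noncomputable def gap (F : Fountain p) : ℕ := Nat.find F.exists_not_mem_rows_one

theorem gap_not_mem_rows_succ (F : Fountain p) (i : ℕ) : F.gap ∉ F.rows (i + 1) := by
  induction i with
  | zero => exact Nat.find_spec F.exists_not_mem_rows_one
  | succ i ih => exact fun hmem => ih (F.rows_succ_subset (i + 1) hmem)

theorem mem_rows_one_of_lt_gap (F : Fountain p) {j : ℕ} (hj : j < F.gap) : j ∈ F.rows 1 :=
  not_not.1 (Nat.find_min F.exists_not_mem_rows_one hj)

theorem gap_add_le_width (F : Fountain p) (hk : p ≤ F.width) : F.gap + p ≤ F.width := by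
  have : F.gap ≤ F.width - p := Nat.find_le fun hmem => by
    have := add_lt_width_of_mem_rows_one hmem
    omega
  omega

theorem rows_one_inter_range_gap (F : Fountain p) : F.rows 1 ∩ range F.gap = range F.gap :=
  inter_eq_right.2 fun _ hj => F.mem_rows_one_of_lt_gap (mem_range.1 hj)

/-- A coin left of the gap cannot have the gap below it, so its whole support stays left of it. -/
theorem add_lt_gap_of_mem {F : Fountain p} {i j : ℕ} (hj : j ∈ F.rows (i + 2))
    (hjg : j < F.gap) : j + p < F.gap := by
  by_contra hcon
  have hg : F.gap = j + (F.gap - j) := by omega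
  exact F.gap_not_mem_rows_succ i (hg ▸ F.supported (i + 1) j hj _ (by omega))

noncomputable def leftPart (F : Fountain p) : Fountain p where
  rows i := F.rows (i + 1) ∩ range F.gap
  bottom_consecutive := by rw [F.rows_one_inter_range_gap, card_range]
  supported i j hj d hd := by
    rw [mem_inter, mem_range] at hj ⊢
    have := add_lt_gap_of_mem hj.1 hj.2
    exact ⟨F.supported (i + 1) j hj.1 d hd, by omega⟩

theorem leftPart_rows (F : Fountain p) (i : ℕ) :
    F.leftPart.rows i = F.rows (i + 1) ∩ range F.gap := rfl

@[simp] theorem leftPart_width (F : Fountain p) : F.leftPart.width = F.gap := by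
  rw [width, leftPart_rows, rows_one_inter_range_gap, card_range]

noncomputable def rightPart (F : Fountain p) : Fountain p where
  rows i := (range F.width).filter (fun j => j + (F.gap + 1) ∈ F.rows i)
  bottom_consecutive := by
    have : (range F.width).filter (fun j => j + (F.gap + 1) ∈ F.rows 0)
        = range (F.width - (F.gap + 1)) := by
      ext j; simp only [mem_filter, mem_range, F.rows_zero]; omega
    rw [this, card_range]
  supported i j hj d hd := by
    simp only [mem_filter, mem_range] at hj ⊢
    have := F.supported i _ hj.2 d hd
    exact ⟨by have := lt_width_of_mem this; omega, by rwa [add_right_comm]⟩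

theorem mem_rightPart_rows {F : Fountain p} {i j : ℕ} :
    j ∈ F.rightPart.rows i ↔ j + (F.gap + 1) ∈ F.rows i := by
  simp only [rightPart, mem_filter, mem_range, and_iff_right_iff_imp]
  intro h
  have := lt_width_of_mem h
  omega

theorem rightPart_rows_zero (F : Fountain p) :
    F.rightPart.rows 0 = range (F.width - (F.gap + 1)) := by
  ext j
  rw [mem_rightPart_rows, F.rows_zero, mem_range, mem_range]
  omega

@[simp] theorem rightPart_width (F : Fountain p) : F.rightPart.width = F.width - (F.gap + 1) := by
  rw [width, rightPart_rows_zero, card_range]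

/-- `P` stands on the first `P.width` coins of the new bottom row and `Q` is shifted right past
position `P.width`, which becomes the first gap of row `1`. -/
def glue (P Q : Fountain p) (h : p ≤ Q.width + 1) : Fountain p where
  rows
    | 0 => range (P.width + 1 + Q.width)
    | i + 1 => P.rows i ∪ (Q.rows (i + 1)).map (addRightEmbedding (P.width + 1))
  bottom_consecutive := by simp
  supported i j hj d hd := by
    cases i with
    | zero =>
      simp only [mem_union, mem_map, addRightEmbedding_apply] at hj
      rcases hj with hj | ⟨k, hk, rfl⟩
      · have := lt_width_of_mem hj
        simp only [mem_range]; omega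
      · have := add_lt_width_of_mem_rows_one hk
        simp only [mem_range]; omega
    | succ i =>
      simp only [mem_union, mem_map, addRightEmbedding_apply] at hj ⊢
      rcases hj with hj | ⟨k, hk, rfl⟩
      · exact Or.inl (P.supported i j hj d hd)
      · exact Or.inr ⟨k + d, Q.supported (i + 1) k hk d hd, by omega⟩

section glue
variable {P Q : Fountain p} {h : p ≤ Q.width + 1}

theorem glue_rows_zero : (glue P Q h).rows 0 = range (P.width + 1 + Q.width) := rfl

theorem mem_glue_rows_succ {i j : ℕ} :
    j ∈ (glue P Q h).rows (i + 1) ↔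
      j ∈ P.rows i ∨ ∃ k ∈ Q.rows (i + 1), k + (P.width + 1) = j := by
  simp [glue]

@[simp] theorem glue_width : (glue P Q h).width = P.width + 1 + Q.width := by
  simp [width, glue_rows_zero]

theorem card_glue_rows_succ (i : ℕ) :
    ((glue P Q h).rows (i + 1)).card = (P.rows i).card + (Q.rows (i + 1)).card := by
  have hdisj : Disjoint (P.rows i) ((Q.rows (i + 1)).map (addRightEmbedding (P.width + 1))) := by
    simp only [disjoint_left, mem_map, addRightEmbedding_apply, not_exists, not_and]
    intro j hj k _ hkj
    have := lt_width_of_mem hj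
    omega
  show (P.rows i ∪ _).card = _
  rw [card_union_of_disjoint hdisj, card_map]

theorem glue_coins (hp : 1 ≤ p) : (glue P Q h).coins = P.coins + P.width + 1 + Q.coins := by
  have hN : (glue P Q h).width < P.width + 1 + Q.width + 1 := by simp
  rw [coins_eq_sum hp _ hN, P.coins_eq_sum hp (N := P.width + 1 + Q.width) (by omega),
    Q.coins_eq_sum hp (N := P.width + 1 + Q.width + 1) (by omega), sum_range_succ',
    sum_range_succ']
  simp only [card_glue_rows_succ, sum_add_distrib, glue_rows_zero, card_range, Q.rows_zero]
  ring

theorem gap_glue : (glue P Q h).gap = P.width := by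
  rw [gap, Nat.find_eq_iff]
  simp only [mem_glue_rows_succ, P.rows_zero, mem_range, not_or, not_exists, not_and]
  exact ⟨⟨lt_irrefl _, fun k _ => by omega⟩, fun n hn hn' => absurd hn hn'⟩

theorem leftPart_glue : (glue P Q h).leftPart = P := by
  ext i j : 3
  rw [leftPart_rows, gap_glue, mem_inter, mem_glue_rows_succ, mem_range]
  constructor
  · rintro ⟨hj | ⟨k, _, rfl⟩, hlt⟩
    · exact hj
    · omega
  · exact fun hj => ⟨Or.inl hj, lt_width_of_mem hj⟩

theorem rightPart_glue : (glue P Q h).rightPart = Q := by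
  ext i j : 3
  rw [mem_rightPart_rows, gap_glue]
  cases i with
  | zero => rw [glue_rows_zero, Q.rows_zero, mem_range, mem_range]; omega
  | succ i =>
    rw [mem_glue_rows_succ]
    constructor
    · rintro (hj | ⟨k, hk, hkj⟩)
      · have := lt_width_of_mem hj; omega
      · rwa [← add_right_cancel hkj]
    · exact fun hj => Or.inr ⟨j, hj, rfl⟩

end glue

theorem glue_leftPart_rightPart (hp : 1 ≤ p) (F : Fountain p) (hk : p ≤ F.width)
    (h : p ≤ F.rightPart.width + 1) : glue F.leftPart F.rightPart h = F := by
  have hg := F.gap_add_le_width hk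
  ext i j : 3
  cases i with
  | zero =>
    rw [glue_rows_zero, F.rows_zero, leftPart_width, rightPart_width, mem_range, mem_range]
    omega
  | succ i =>
    rw [mem_glue_rows_succ, leftPart_rows, mem_inter, mem_range, leftPart_width]
    simp only [mem_rightPart_rows]
    constructor
    · rintro (⟨hj, _⟩ | ⟨k, hk, rfl⟩)
      exacts [hj, hk]
    · intro hj
      rcases lt_trichotomy j F.gap with hlt | rfl | hgt
      · exact Or.inl ⟨hj, hlt⟩
      · exact absurd hj (F.gap_not_mem_rows_succ i)
      · exact Or.inr ⟨j - (F.gap + 1), by rwa [Nat.sub_add_cancel hgt], by omega⟩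

noncomputable def glueEquiv (hp : 1 ≤ p) :
    Fountain p × {Q : Fountain p // p - 1 ≤ Q.width} ≃ {W : Fountain p // p ≤ W.width} where
  toFun PQ := ⟨glue PQ.1 PQ.2 (by have := PQ.2.2; omega), by
    have := PQ.2.2
    rw [glue_width]; omega⟩
  invFun W := (W.1.leftPart, ⟨W.1.rightPart, by
    have := W.1.gap_add_le_width W.2
    rw [rightPart_width]; omega⟩)
  left_inv _ := by
    dsimp only
    exact Prod.ext leftPart_glue (Subtype.ext rightPart_glue)
  right_inv W := Subtype.ext (by
    dsimp only
    exact glue_leftPart_rightPart hp _ W.2 _)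

noncomputable def weight (F : Fountain p) : Fin 2 →₀ ℕ := single 0 F.coins + single 1 F.width

noncomputable def substWeight (F : Fountain p) : Fin 2 →₀ ℕ :=
  single 0 (F.coins + F.width) + single 1 F.width

theorem weight_glue (hp : 1 ≤ p) (P Q : Fountain p) (h : p ≤ Q.width + 1) :
    (glue P Q h).weight = single 0 1 + single 1 1 + P.substWeight + Q.weight := by
  simp only [weight, substWeight, glue_coins hp, glue_width, single_add]
  abel

@[simp] theorem weight_bottomRow (k : ℕ) : (bottomRow p k).weight = single 0 k + single 1 k := by
  simp [weight]

theorem finite_fiber_of_apply_one (hp : 1 ≤ p) {w : Fountain p → Fin 2 →₀ ℕ} {c : ℕ}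
    (hw : ∀ F, w F 1 = F.width + c) (d : Fin 2 →₀ ℕ) : Finite {F // w F = d} :=
  have := finite_width_eq hp (p := p) (d 1 - c)
  Finite.of_injective
    (fun F => (⟨F.1, by have := hw F.1; rw [F.2] at this; omega⟩ :
      {F : Fountain p // F.width = d 1 - c}))
    fun _ _ h => Subtype.ext (by simpa using congrArg Subtype.val h)

def bottomRowEquiv {r : ℕ} (hr : r ≤ p + 1) :
    Fin r ≃ {F : Fountain p // ¬ r ≤ F.width} where
  toFun i := ⟨bottomRow p i, by simp⟩
  invFun F := ⟨F.1.width, by omega⟩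
  left_inv i := Fin.ext (bottomRow_width (p := p) _)
  right_inv F := Subtype.ext (F.1.eq_bottomRow (by omega)).symm

end Fountain

open Fountain

theorem fgf_eq_weightGF (p : ℕ) : Fgf p = weightGF ℚ (weight (p := p)) := by
  ext d
  rw [coeff_weightGF, coeff_apply, Fgf, fcount, ← Nat.card_coe_set_eq]
  exact congrArg _ (Nat.card_congr (Equiv.subtypeEquivRight fun F => by
    simp only [Set.mem_ofPred_eq, weight, Finsupp.single_zero_add_single_one_eq_iff]))

theorem fqz_eq_weightGF (p : ℕ) : Fqz p = weightGF ℚ (substWeight (p := p)) := by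
  ext d
  rw [coeff_weightGF, coeff_apply, Fqz]
  split_ifs with hd
  · rw [fcount, ← Nat.card_coe_set_eq]
    exact congrArg _ (Nat.card_congr (Equiv.subtypeEquivRight fun F => by
      simp only [Set.mem_ofPred_eq, substWeight, Finsupp.single_zero_add_single_one_eq_iff]
      omega))
  · have : IsEmpty {F : Fountain p // F.substWeight = d} := ⟨fun F => hd <| by
      have := Finsupp.single_zero_add_single_one_eq_iff.1 F.2
      omega⟩
    simp

theorem weightGF_not_le_width {p r : ℕ} (hr : r ≤ p + 1) :
    weightGF ℚ (fun F : {F : Fountain p // ¬ r ≤ F.width} => F.1.weight) =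
      ∑ i ∈ range r, (X 0 * X 1) ^ i := by
  rw [weightGF_congr (bottomRowEquiv hr)
    (w' := fun i : Fin r => (single 0 (i : ℕ) + single 1 (i : ℕ) : Fin 2 →₀ ℕ))
    fun i => weight_bottomRow i, weightGF_of_fintype]
  simp only [X_zero_mul_X_one_pow]
  exact Fin.sum_univ_eq_sum_range (fun i => monomial (single 0 i + single 1 i) (1 : ℚ)) r

theorem fgf_eq_geom_sum_add {p r : ℕ} (hp : 1 ≤ p) (hr : r ≤ p + 1) :
    Fgf p = ∑ i ∈ range r, (X 0 * X 1) ^ i +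
      weightGF ℚ (fun F : {F : Fountain p // r ≤ F.width} => F.1.weight) := by
  rw [fgf_eq_weightGF,
    weightGF_eq_add_compl _ (finite_fiber_of_apply_one hp (c := 0) fun F => by simp [weight])
      fun F => r ≤ F.width,
    weightGF_not_le_width hr, add_comm]

theorem X_mul_X_mul_fqz_mul_weightGF {p : ℕ} (hp : 1 ≤ p) :
    X 0 * X 1 * Fqz p * weightGF ℚ (fun Q : {Q : Fountain p // p - 1 ≤ Q.width} => Q.1.weight) =
      weightGF ℚ (fun W : {W : Fountain p // p ≤ W.width} => W.1.weight) := by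
  rw [fqz_eq_weightGF, ← pow_one (X 0 * X 1), X_zero_mul_X_one_pow, monomial_mul_weightGF,
    weightGF_mul _ _
      (finite_fiber_of_apply_one hp (c := 1) fun F => by simp [substWeight, add_comm])
      (finite_fibers_subtype _ (finite_fiber_of_apply_one hp (c := 0) fun F => by simp [weight]) _),
    weightGF_congr (glueEquiv hp) fun PQ => weight_glue hp PQ.1 PQ.2 (by have := PQ.2.2; omega)]

theorem fgf_sub_geom_sum_mul {p : ℕ} (hp : 1 ≤ p) :
    (Fgf p - ∑ i ∈ range (p - 1), (X 0 * X 1) ^ i) * (1 - X 0 * X 1 * Fqz p) =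
      (X 0 * X 1) ^ (p - 1) := by
  have h₁ := fgf_eq_geom_sum_add hp (r := p - 1) (by omega)
  have h₂ := fgf_eq_geom_sum_add hp (r := p) (by omega)
  have hW := X_mul_X_mul_fqz_mul_weightGF hp
  have hgeom : ∑ i ∈ range p, (X 0 * X 1 : MvPowerSeries (Fin 2) ℚ) ^ i =
      ∑ i ∈ range (p - 1), (X 0 * X 1) ^ i + (X 0 * X 1) ^ (p - 1) := by
    rw [← sum_range_succ, Nat.sub_add_cancel hp]
  linear_combination (-(X 0 * X 1 * Fqz p)) * h₁ + h₂ - hW + hgeom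

open MvPowerSeries in
/-- The closed recursive form of the generating function of `p`-fountains:
`F(q,z) = (qz)^{p-1} / (1 - qz F(q,qz)) + (1 - (qz)^{p-1}) / (1 - qz)`,
as formal power series (`Fqz p` is the substituted series `F(q,qz)`). -/
theorem fountain_closed_form (p : ℕ) (hp : 1 ≤ p) :
    Fgf p = (X 0 * X 1) ^ (p - 1) * (1 - X 0 * X 1 * Fqz p)⁻¹ +
      (1 - (X 0 * X 1) ^ (p - 1)) * (1 - X 0 * X 1)⁻¹ := by
  have hA : constantCoeff (X 0 * X 1 : MvPowerSeries (Fin 2) ℚ) = 0 := by simp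
  have hF : Fgf p - ∑ i ∈ range (p - 1), (X 0 * X 1) ^ i =
      (X 0 * X 1) ^ (p - 1) * (1 - X 0 * X 1 * Fqz p)⁻¹ :=
    (MvPowerSeries.eq_mul_inv_iff_mul_eq (by simp [hA])).2 (fgf_sub_geom_sum_mul hp)
  have hG : ∑ i ∈ range (p - 1), (X 0 * X 1 : MvPowerSeries (Fin 2) ℚ) ^ i =
      (1 - (X 0 * X 1) ^ (p - 1)) * (1 - X 0 * X 1)⁻¹ :=
    (MvPowerSeries.eq_mul_inv_iff_mul_eq (by simp [hA])).2 (geom_sum_mul_neg _ _)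
  rw [← hF, ← hG, sub_add_cancel]
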